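/- arXiv:1712.08660 — 5 statements merged into one kernel-verified Lean document; each statement's English description precedes it below -/
import Mathlib

section
/- Let T ∈ F^(I×J×K) with K = {1,…,k} ∪ {1',…,k'}, let S_i denote the i-th 3-slice of T, and let V be the F-linear span of S_{1'},…,S_{k'}. Then rank_F(T) ≥ min{rank_F(T') : T' ∈ T mod (0,0,V)} + dim V, where T mod (0,0,V) is the set of tensors obtained from the restriction of T to I×J×{1,…,k} by adding elements of V to its 3-slices. -/
/-! Write `T = ∑_{t < r} a_t ⊗ b_t ⊗ c_t` with `r = rank T`. The 3-slices of `T` are the images of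
the vectors `c(·, κ) ∈ F^r` under the linear map `L : x ↦ ∑_t x_t a_t ⊗ b_t`, so `V = L(U)` for the
span `U` of the primed vectors. There is a set `s` of at most `r - dim U` coordinates of `F^r` such
that every vector agrees off `s` with some element of `U`. Correcting each unprimed `c(·, κ)` by
such an element gives vectors supported on `s`, hence a tensor in `T mod (0,0,V)` of rank at most
`|s| ≤ r - dim U ≤ r - dim V`. -/

/-- The rank of a tensor `T : I → J → K → F`: the least `r` such that `T` is a sum of `r`
decomposable tensors. -/
noncomputable def trank (F : Type*) [Field F] {I J K : Type*} (T : I → J → K → F) : ℕ :=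
  sInf {r | ∃ a : Fin r → I → F, ∃ b : Fin r → J → F, ∃ c : Fin r → K → F,
    ∀ i j k, T i j k = ∑ t, a t i * b t j * c t k}

open Module

/- Choose `s` so that the images of the standard basis vectors indexed by `s` form a basis of
`(ι → K) ⧸ W`. -/
theorem Submodule.exists_finset_card_add_finrank_le_eqOn_compl {K ι : Type*} [Field K]
    [Fintype ι] (W : Submodule K (ι → K)) :
    ∃ s : Finset ι, s.card + finrank K W ≤ Fintype.card ι ∧
      ∀ x : ι → K, ∃ w ∈ W, Set.EqOn x w (↑s)ᶜ := by
  classical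
  set e := Pi.basisFun K ι
  set v : ι → (ι → K) ⧸ W := W.mkQ ∘ e
  obtain ⟨b, -, -, hspan, hli⟩ :=
    exists_linearIndepOn_extension (linearIndepOn_empty K v) (Set.empty_subset Set.univ)
  have hspan_univ : Submodule.span K (v '' Set.univ) = ⊤ := by
    rw [Set.image_univ, Set.range_comp, ← Submodule.map_span, e.span_eq, Submodule.map_top,
      Submodule.range_mkQ]
  refine ⟨b.toFinset, ?_, fun x => ?_⟩
  · have hcard := hli.fintype_card_le_finrank
    have hquot := W.finrank_quotient_add_finrank
    rw [Set.toFinset_card]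
    simp only [finrank_fintype_fun_eq_card] at hquot
    omega
  · obtain ⟨l, hl, hlx⟩ := (Finsupp.mem_span_image_iff_linearCombination K).mp
      (Submodule.span_le.mpr hspan (hspan_univ.ge (Submodule.mem_top (x := W.mkQ x))))
    have hle : Finsupp.linearCombination K e l = ⇑l := by
      ext i
      simp [e, Finsupp.linearCombination_apply, Finsupp.sum_fintype, Pi.single_apply]
    refine ⟨x - l, ?_, fun i hi => ?_⟩
    · rw [← Submodule.Quotient.eq, ← hle, ← W.mkQ_apply, ← W.mkQ_apply, ← hlx,
        Finsupp.apply_linearCombination]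
    · simp [Finsupp.notMem_support_iff.mp fun h => hi (by simpa using hl h)]

section trank

variable {F I J K ι : Type*} [Field F]

theorem exists_fin_decomposition_of_eq_sum [Fintype ι] {T : I → J → K → F}
    (a : ι → I → F) (b : ι → J → F) (c : ι → K → F)
    (hT : ∀ i j k, T i j k = ∑ t, a t i * b t j * c t k) :
    ∃ a' : Fin (Fintype.card ι) → I → F, ∃ b' : Fin (Fintype.card ι) → J → F,
      ∃ c' : Fin (Fintype.card ι) → K → F, ∀ i j k, T i j k = ∑ t, a' t i * b' t j * c' t k := by
  let e := (Fintype.equivFin ι).symm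
  exact ⟨a ∘ e, b ∘ e, c ∘ e, fun i j k => by
    simp only [hT, Function.comp_apply, e.sum_comp (fun t => a t i * b t j * c t k)]⟩

theorem trank_le_card_of_eq_sum (s : Finset ι) {T : I → J → K → F}
    (a : ι → I → F) (b : ι → J → F) (c : ι → K → F)
    (hT : ∀ i j k, T i j k = ∑ t ∈ s, a t i * b t j * c t k) :
    trank F T ≤ s.card := by
  rw [← Fintype.card_coe]
  exact Nat.sInf_le <| exists_fin_decomposition_of_eq_sum (fun t : s => a t) (fun t => b t)
    (fun t => c t) fun i j k => by rw [hT, ← s.sum_coe_sort]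

theorem exists_trank_decomposition [Fintype I] [Fintype J] [Fintype K] (T : I → J → K → F) :
    ∃ a : Fin (trank F T) → I → F, ∃ b : Fin (trank F T) → J → F,
      ∃ c : Fin (trank F T) → K → F, ∀ i j k, T i j k = ∑ t, a t i * b t j * c t k := by
  classical
  obtain ⟨a, b, c, hT⟩ := exists_fin_decomposition_of_eq_sum (T := T)
    (fun p : I × J × K => Pi.single p.1 (T p.1 p.2.1 p.2.2)) (fun p => Pi.single p.2.1 1)
    (fun p => Pi.single p.2.2 1) fun i j k => by simp [Fintype.sum_prod_type, Pi.single_apply]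
  exact Nat.sInf_mem (s := {r | ∃ a : Fin r → I → F, ∃ b : Fin r → J → F, ∃ c : Fin r → K → F,
    ∀ i j k, T i j k = ∑ t, a t i * b t j * c t k}) ⟨_, a, b, c, hT⟩

theorem sInf_trank_mod_add_finrank_le_card [Fintype ι] {k k' : ℕ}
    {T : I → J → (Fin k ⊕ Fin k') → F} {V : Submodule F (I → J → F)}
    (hV : V = Submodule.span F (Set.range fun κ' : Fin k' => fun i j => T i j (Sum.inr κ')))
    (a : ι → I → F) (b : ι → J → F) (c : ι → (Fin k ⊕ Fin k') → F)
    (hT : ∀ i j κ, T i j κ = ∑ t, a t i * b t j * c t κ) :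
    sInf {r | ∃ T' : I → J → Fin k → F,
        (∀ κ : Fin k, (fun i j => T' i j κ - T i j (Sum.inl κ)) ∈ V) ∧ trank F T' = r}
      + finrank F V ≤ Fintype.card ι := by
  let L := Fintype.linearCombination F fun t (i : I) (j : J) => a t i * b t j
  have hslice : ∀ κ, (fun i j => T i j κ) = L (fun t => c t κ) := by
    intro κ
    ext i j
    simp [L, Fintype.linearCombination_apply, hT, mul_comm, mul_left_comm]
  let U := Submodule.span F (Set.range fun κ' t => c t (Sum.inr κ'))
  have hVU : V = U.map L := by
    rw [hV, Submodule.map_span, ← Set.range_comp]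
    congr 2
    exact funext fun κ' => hslice (Sum.inr κ')
  obtain ⟨s, hs, hcompl⟩ := U.exists_finset_card_add_finrank_le_eqOn_compl
  choose w hwU hw using fun κ : Fin k => hcompl fun t => c t (Sum.inl κ)
  let y : ι → Fin k → F := fun t κ => c t (Sum.inl κ) - w κ t
  let T' : I → J → Fin k → F := fun i j κ => ∑ t, a t i * b t j * y t κ
  have hmod : ∀ κ, (fun i j => T' i j κ - T i j (Sum.inl κ)) ∈ V := by
    intro κ
    have hdiff : (fun i j => T' i j κ - T i j (Sum.inl κ)) = -L (w κ) := by
      ext i j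
      simp only [T', y, hT, mul_sub, Finset.sum_sub_distrib]
      simp [L, Fintype.linearCombination_apply, mul_comm, mul_left_comm]
    rw [hdiff]
    exact neg_mem (hVU ▸ Submodule.mem_map_of_mem (hwU κ))
  have hrank : trank F T' ≤ s.card := by
    refine trank_le_card_of_eq_sum s a b y fun i j κ => ?_
    refine (Finset.sum_subset s.subset_univ fun t _ ht => ?_).symm
    simp [y, hw κ ht]
  calc _ ≤ s.card + finrank F U := by
        gcongr
        · exact le_trans (Nat.sInf_le ⟨T', hmod, rfl⟩) hrank
        · exact hVU ▸ U.finrank_map_le L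
    _ ≤ Fintype.card ι := hs

end trank

/-- Slice elimination (lower bound): if `V` is the span of the 3-slices of `T` indexed by the
primed part `Fin k'` of `K = Fin k ⊕ Fin k'`, then
`rank T ≥ min { rank T' : T' ∈ T mod (0,0,V) } + dim V`. -/
theorem trank_ge_min_mod_add_dim {F I J : Type*} [Field F] [Fintype I] [Fintype J]
    {k k' : ℕ} (T : I → J → (Fin k ⊕ Fin k') → F)
    (V : Submodule F (I → J → F))
    (hV : V = Submodule.span F (Set.range fun κ' : Fin k' => fun i j => T i j (Sum.inr κ'))) :
    sInf {r | ∃ T' : I → J → Fin k → F,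
        (∀ κ : Fin k, (fun i j => T' i j κ - T i j (Sum.inl κ)) ∈ V) ∧ trank F T' = r}
      + Module.finrank F V ≤ trank F T := by
  obtain ⟨a, b, c, hT⟩ := exists_trank_decomposition T
  simpa using sInf_trank_mod_add_finrank_le_card hV a b c hT
end

section
/- With the notation of the slice-elimination lemma, if additionally each of the slices S_{1'},…,S_{k'} is a rank-one matrix, then rank_F(T) = min{rank_F(T') : T' ∈ T mod (0,0,V)} + dim V. -/
open Module Submodule

theorem Matrix.exists_eq_vecMulVec_of_rank_le_one {F m n : Type*} [Field F] [Fintype n]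
    (A : Matrix m n F) (hA : A.rank ≤ 1) : ∃ u : m → F, ∃ v : n → F, A = vecMulVec u v := by
  classical
  obtain ⟨w, hw⟩ := finrank_le_one_iff.mp hA
  choose v hv using fun j => hw ⟨A.mulVecLin (Pi.single j 1), LinearMap.mem_range_self _ _⟩
  have hcol : ∀ j, A.col j = v j • (w : m → F) := fun j => by
    simpa [mulVec_single] using (congr_arg Subtype.val (hv j)).symm
  exact ⟨w, v, Matrix.ext fun i j => by
    simpa [vecMulVec_apply, mul_comm] using congr_fun (hcol j) i⟩

theorem exists_finset_card_eq_finrank_span_image_eq (F : Type*) {M ι : Type*} [Field F]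
    [AddCommGroup M] [Module F M] [FiniteDimensional F M] (v : ι → M) :
    ∃ s : Finset ι, s.card = finrank F (span F (Set.range v)) ∧
      span F (v '' s) = span F (Set.range v) := by
  classical
  obtain ⟨κ, a, ha, hspan, hli⟩ := exists_linearIndependent' F v
  have := hli.finite
  have := Fintype.ofFinite κ
  refine ⟨(Set.range a).toFinset, ?_, ?_⟩
  · rw [← hspan, finrank_span_eq_card hli, Set.toFinset_range,
      Finset.card_image_of_injective _ ha, Finset.card_univ]
  · rw [Set.coe_toFinset, ← Set.range_comp, hspan]

theorem Submodule.exists_finset_card_add_finrank_le_forall_exists_sub_mem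
    {F ι : Type*} [Field F] [Fintype ι] (P : Submodule F (ι → F)) :
    ∃ s : Finset ι, s.card + finrank F P ≤ Fintype.card ι ∧
      ∀ y : ι → F, ∃ w : ι → F, (∀ t ∉ s, w t = 0) ∧ y - w ∈ P := by
  classical
  have hspan : span F (Set.range fun t => P.mkQ (Pi.single t 1)) = ⊤ := by
    rw [show (fun t => P.mkQ (Pi.single t 1)) = P.mkQ ∘ Pi.basisFun F ι from
      funext fun t => by simp, Set.range_comp, span_image, (Pi.basisFun F ι).span_eq, map_top,
      range_mkQ]
  obtain ⟨s, hcard, hs⟩ := exists_finset_card_eq_finrank_span_image_eq F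
    fun t => P.mkQ (Pi.single t (1 : F))
  refine ⟨s, ?_, fun y => ?_⟩
  · rw [hcard, hspan, finrank_top, P.finrank_quotient_add_finrank, finrank_fintype_fun_eq_card]
  · have hy : P.mkQ y ∈ span F ((fun t => P.mkQ (Pi.single t (1 : F))) '' s) := by
      rw [hs, hspan]; exact mem_top
    obtain ⟨u, hu, c, hc⟩ := (mem_span_image_iff_exists_fun F).mp hy
    refine ⟨∑ t, c t • Pi.single (t : ι) (1 : F), fun t ht => ?_, ?_⟩
    · simp only [Finset.sum_apply, Pi.smul_apply, smul_eq_mul]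
      exact Finset.sum_eq_zero fun x _ => by
        rw [Pi.single_eq_of_ne (by rintro rfl; exact ht (hu x.2)), mul_zero]
    · rw [← Submodule.Quotient.eq, ← mkQ_apply, ← mkQ_apply, ← hc, map_sum]
      simp

section trank

variable {F I J K : Type*} [Field F]

theorem trank_le_card {ι : Type*} [Fintype ι] {T : I → J → K → F}
    (a : ι → I → F) (b : ι → J → F) (c : ι → K → F)
    (hT : ∀ i j k, T i j k = ∑ t, a t i * b t j * c t k) : trank F T ≤ Fintype.card ι := by
  let e := (Fintype.equivFin ι).symm
  exact Nat.sInf_le ⟨a ∘ e, b ∘ e, c ∘ e, fun i j k => by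
    rw [hT, ← e.sum_comp]; rfl⟩

theorem exists_eq_sum_trank [Finite I] [Finite J] (T : I → J → K → F) :
    ∃ a : Fin (trank F T) → I → F, ∃ b : Fin (trank F T) → J → F,
      ∃ c : Fin (trank F T) → K → F, ∀ i j k, T i j k = ∑ t, a t i * b t j * c t k := by
  classical
  have := Fintype.ofFinite I
  have := Fintype.ofFinite J
  let e := (Fintype.equivFin (I × J)).symm
  have hne : ∃ r, ∃ a : Fin r → I → F, ∃ b : Fin r → J → F, ∃ c : Fin r → K → F,
      ∀ i j k, T i j k = ∑ t, a t i * b t j * c t k :=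
    ⟨_, fun t => Pi.single (e t).1 1, fun t => Pi.single (e t).2 1, fun t => T (e t).1 (e t).2,
      fun i j k => by
        rw [Fintype.sum_equiv e _
          (fun p => (Pi.single p.1 1 : I → F) i * (Pi.single p.2 1 : J → F) j * T p.1 p.2 k)
          fun _ => rfl,
          Fintype.sum_prod_type]
        simp [Pi.single_apply]⟩
  exact Nat.sInf_mem hne

theorem trank_add_le [Finite I] [Finite J] (T₁ T₂ : I → J → K → F) :
    trank F (T₁ + T₂) ≤ trank F T₁ + trank F T₂ := by
  obtain ⟨a₁, b₁, c₁, h₁⟩ := exists_eq_sum_trank T₁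
  obtain ⟨a₂, b₂, c₂, h₂⟩ := exists_eq_sum_trank T₂
  simpa using trank_le_card (Sum.elim a₁ a₂) (Sum.elim b₁ b₂) (Sum.elim c₁ c₂)
    fun i j k => by simp [Fintype.sum_sum_type, h₁, h₂]

theorem trank_sumElim_zero_le {K' : Type*} [Finite I] [Finite J] (T : I → J → K → F) :
    trank F (fun i j => Sum.elim (T i j) (0 : K' → F)) ≤ trank F T := by
  obtain ⟨a, b, c, h⟩ := exists_eq_sum_trank T
  simpa using trank_le_card a b (fun t => Sum.elim (c t) 0) fun i j k => by
    cases k <;> simp [h]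

theorem trank_le_card_of_slice_mem_span {ι : Type*} [Fintype ι] (u : ι → I → F)
    (v : ι → J → F) (T : I → J → K → F)
    (hT : ∀ k, (fun i j => T i j k) ∈ span F (Set.range fun t i j => u t i * v t j)) :
    trank F T ≤ Fintype.card ι := by
  choose c hc using fun k => (mem_span_range_iff_exists_fun F).mp (hT k)
  refine trank_le_card u v (fun t k => c k t) fun i j k => ?_
  rw [← congr_fun₂ (hc k) i j]
  simp [mul_comm]

end trank

section sliceElimination

variable {F I J K K' : Type*} [Field F] [Finite I]

theorem trank_le_trank_add_finrank_of_sub_mem_span [Fintype J] (T : I → J → (K ⊕ K') → F)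
    (hrk : ∀ κ' : K', (Matrix.of fun i j => T i j (Sum.inr κ')).rank ≤ 1)
    (T' : I → J → K → F)
    (hT' : ∀ κ, (fun i j => T' i j κ - T i j (Sum.inl κ)) ∈
      span F (Set.range fun κ' i j => T i j (Sum.inr κ'))) :
    trank F T ≤ trank F T' + finrank F (span F (Set.range fun κ' i j => T i j (Sum.inr κ'))) := by
  choose u v huv using fun κ' =>
    (Matrix.of fun i j => T i j (Sum.inr κ')).exists_eq_vecMulVec_of_rank_le_one (hrk κ')
  have hS : (fun κ' i j => T i j (Sum.inr κ')) = fun κ' i j => u κ' i * v κ' j :=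
    funext fun κ' => funext₂ fun i j => by
      simpa [Matrix.vecMulVec_apply] using congr_fun₂ (huv κ') i j
  rw [hS] at hT' ⊢
  obtain ⟨s, hcard, hs⟩ := exists_finset_card_eq_finrank_span_image_eq F
    fun κ' i j => u κ' i * v κ' j
  simp only [Set.image_eq_range, Finset.coe_sort_coe] at hs
  let R : I → J → (K ⊕ K') → F := fun i j =>
    Sum.elim (fun κ => T i j (Sum.inl κ) - T' i j κ) fun κ' => T i j (Sum.inr κ')
  have hR : trank F R ≤ s.card := by
    refine (trank_le_card_of_slice_mem_span (fun t : s => u t) (fun t => v t) R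
      fun k => ?_).trans_eq (Fintype.card_coe s)
    rw [hs]
    cases k with
    | inl κ =>
      convert neg_mem (hT' κ) using 1
      funext i j
      simp [R]
    | inr κ' => exact subset_span ⟨κ', (congr_fun hS κ').symm⟩
  calc trank F T = trank F ((fun i j => Sum.elim (T' i j) (0 : K' → F)) + R) := by
        congr; funext i j k; cases k <;> simp [R]
    _ ≤ trank F T' + s.card :=
        (trank_add_le _ _).trans (add_le_add (trank_sumElim_zero_le T') hR)
    _ = _ := by rw [hcard]

theorem exists_trank_add_finrank_le [Finite J] (T : I → J → (K ⊕ K') → F) :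
    ∃ T' : I → J → K → F, (∀ κ, (fun i j => T' i j κ - T i j (Sum.inl κ)) ∈
      span F (Set.range fun κ' i j => T i j (Sum.inr κ'))) ∧
      trank F T' + finrank F (span F (Set.range fun κ' i j => T i j (Sum.inr κ'))) ≤ trank F T := by
  obtain ⟨a, b, c, hT⟩ := exists_eq_sum_trank T
  set V := span F (Set.range fun κ' i j => T i j (Sum.inr κ'))
  let L := Fintype.linearCombination F fun t i j => a t i * b t j
  have hslice : ∀ k, (fun i j => T i j k) = L fun t => c t k := fun k => by
    funext i j; simp [L, Fintype.linearCombination_apply, hT, mul_comm]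
  have hVL : V ≤ LinearMap.range L := span_le.mpr <| by
    rintro _ ⟨κ', rfl⟩; exact ⟨_, (hslice _).symm⟩
  have hdim : finrank F V ≤ finrank F (V.comap L) := by
    conv_lhs => rw [← map_comap_eq_of_le hVL]
    exact finrank_map_le L _
  obtain ⟨s, hs, hsupp⟩ := (V.comap L).exists_finset_card_add_finrank_le_forall_exists_sub_mem
  choose w hw0 hwV using fun κ => hsupp fun t => c t (Sum.inl κ)
  refine ⟨fun i j κ => L (w κ) i j, fun κ => ?_, ?_⟩
  · have h := neg_mem (hwV κ)
    rw [mem_comap, map_neg, map_sub, ← hslice, neg_sub] at h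
    exact h
  · have hT' : trank F (fun i j κ => L (w κ) i j) ≤ s.card := by
      refine (trank_le_card_of_slice_mem_span (fun t : s => a t) (fun t => b t) _
        fun κ => ?_).trans_eq (Fintype.card_coe s)
      simp only [L, Fintype.linearCombination_apply]
      refine sum_mem fun t _ => ?_
      by_cases ht : t ∈ s
      · exact smul_mem _ _ (subset_span ⟨⟨t, ht⟩, rfl⟩)
      · simp [hw0 κ t ht]
    rw [Fintype.card_fin] at hs
    omega

end sliceElimination

theorem trank_eq_min_mod_add_dim_general {F I J : Type*} [Field F] [Fintype I] [Fintype J]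
    {k k' : ℕ} (T : I → J → (Fin k ⊕ Fin k') → F)
    (V : Submodule F (I → J → F))
    (hV : V = Submodule.span F (Set.range fun κ' : Fin k' => fun i j => T i j (Sum.inr κ')))
    (hrk : ∀ κ' : Fin k', (Matrix.of fun i j => T i j (Sum.inr κ')).rank = 1) :
    trank F T = sInf {r | ∃ T' : I → J → Fin k → F,
        (∀ κ : Fin k, (fun i j => T' i j κ - T i j (Sum.inl κ)) ∈ V) ∧ trank F T' = r}
      + Module.finrank F V := by
  subst hV
  apply le_antisymm
  · rw [← Nat.sub_le_iff_le_add]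
    refine le_csInf ⟨_, fun i j κ => T i j (Sum.inl κ),
      fun κ => by simp only [sub_self]; exact zero_mem _, rfl⟩ ?_
    rintro _ ⟨T', hT', rfl⟩
    exact Nat.sub_le_iff_le_add.mpr
      (trank_le_trank_add_finrank_of_sub_mem_span T (fun κ' => (hrk κ').le) T' hT')
  · obtain ⟨T', hT', hle⟩ := exists_trank_add_finrank_le T
    calc _ ≤ trank F T' + _ := by gcongr; exact Nat.sInf_le ⟨T', hT', rfl⟩
      _ ≤ trank F T := hle

/-- Slice elimination (equality case): if moreover the adjoined 3-slices `S_{1'},…,S_{k'}` are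
rank-one matrices, then `rank T = min { rank T' : T' ∈ T mod (0,0,V) } + dim V`. -/
theorem trank_eq_min_mod_add_dim {F I J : Type*} [Field F] [Fintype I] [Fintype J]
    [DecidableEq I] [DecidableEq J]
    {k k' : ℕ} (T : I → J → (Fin k ⊕ Fin k') → F)
    (V : Submodule F (I → J → F))
    (hV : V = Submodule.span F (Set.range fun κ' : Fin k' => fun i j => T i j (Sum.inr κ')))
    (hrk : ∀ κ' : Fin k', (Matrix.of fun i j => T i j (Sum.inr κ')).rank = 1) :
    trank F T = sInf {r | ∃ T' : I → J → Fin k → F,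
        (∀ κ : Fin k, (fun i j => T' i j κ - T i j (Sum.inl κ)) ∈ V) ∧ trank F T' = r}
      + Module.finrank F V :=
  trank_eq_min_mod_add_dim_general T V hV hrk
end

section
/- Let p_1,…,p_q be polynomials over a field F all of the same total degree d, and let p^in denote the sum of the monomials of p of maximal degree (the initial form). If (p_1^in,…,p_q^in) are algebraically independent over F, then (p_1,…,p_q) are algebraically independent over F. -/
/-!
If `Q ≠ 0` has total degree `e` and every `p i` has total degree at most `d > 0`, then the
component of degree `e * d` of `Q(p)` is `Q_e(pⁱⁿ)`, where `Q_e` is the top-degree form of `Q`: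
monomials of `Q` of lower degree only produce terms of degree `< e * d`, and the top component
of a product of polynomials of bounded degree is the product of their top components.
Since `Q_e ≠ 0`, independence of the initial forms gives `Q_e(pⁱⁿ) ≠ 0`, hence `Q(p) ≠ 0`.
For `d = 0` the `p i` are constants and coincide with their initial forms.
-/

open MvPolynomial

namespace MvPolynomial

variable {R σ : Type*} [CommSemiring R]

theorem homogeneousComponent_mul_of_totalDegree_le {f g : MvPolynomial σ R} {m n : ℕ}
    (hf : f.totalDegree ≤ m) (hg : g.totalDegree ≤ n) :
    homogeneousComponent (m + n) (f * g) =
      homogeneousComponent m f * homogeneousComponent n g := by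
  classical
  ext v
  rw [coeff_homogeneousComponent]
  split_ifs with hv
  · rw [coeff_mul, coeff_mul]
    refine Finset.sum_congr rfl fun x hx => ?_
    have hx : x.1.degree + x.2.degree = m + n := by
      rw [← map_add, Finset.HasAntidiagonal.mem_antidiagonal.1 hx, hv]
    rw [coeff_homogeneousComponent, coeff_homogeneousComponent]
    rcases lt_trichotomy x.1.degree m with h | h | h
    · rw [coeff_eq_zero_of_totalDegree_lt (f := g) (d := x.2) (by change _ < x.2.degree; omega)]
      simp
    · have h2 : x.2.degree = n := by omega
      simp [h, h2]
    · rw [coeff_eq_zero_of_totalDegree_lt (f := f) (d := x.1) (by change _ < x.1.degree; omega)]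
      simp
  · exact (((homogeneousComponent_isHomogeneous m f).mul
      (homogeneousComponent_isHomogeneous n g)).coeff_eq_zero hv).symm

theorem homogeneousComponent_prod_of_totalDegree_le {ι : Type*} (s : Finset ι)
    {f : ι → MvPolynomial σ R} {n : ι → ℕ} (h : ∀ i ∈ s, (f i).totalDegree ≤ n i) :
    homogeneousComponent (∑ i ∈ s, n i) (∏ i ∈ s, f i) =
      ∏ i ∈ s, homogeneousComponent (n i) (f i) := by
  induction s using Finset.cons_induction with
  | empty => simp
  | cons a s ha ih =>
    rw [Finset.forall_mem_cons] at h
    have hprod : (∏ i ∈ s, f i).totalDegree ≤ ∑ i ∈ s, n i :=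
      (totalDegree_finsetProd s f).trans (Finset.sum_le_sum h.2)
    rw [Finset.prod_cons, Finset.sum_cons, homogeneousComponent_mul_of_totalDegree_le h.1 hprod,
      ih h.2, Finset.prod_cons]

theorem homogeneousComponent_pow_of_totalDegree_le {f : MvPolynomial σ R} {m : ℕ}
    (hf : f.totalDegree ≤ m) (k : ℕ) :
    homogeneousComponent (k * m) (f ^ k) = homogeneousComponent m f ^ k := by
  simpa using homogeneousComponent_prod_of_totalDegree_le (Finset.range k) (f := fun _ => f)
    (n := fun _ => m) fun _ _ => hf

theorem homogeneousComponent_totalDegree_ne_zero {f : MvPolynomial σ R} (hf : f ≠ 0) :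
    homogeneousComponent f.totalDegree f ≠ 0 := by
  obtain ⟨v, hv, hve⟩ := Finset.exists_mem_eq_sup f.support (support_nonempty.2 hf) Finsupp.degree
  have hdeg : v.degree = f.totalDegree := hve.symm
  intro h0
  have hcoeff := congrArg (coeff v) h0
  rw [coeff_homogeneousComponent, if_pos hdeg, coeff_zero] at hcoeff
  exact mem_support_iff.1 hv hcoeff

variable {ι : Type*} {p : ι → MvPolynomial σ R} {d : ℕ}

theorem totalDegree_aeval_monomial_le (hp : ∀ i, (p i).totalDegree ≤ d) (v : ι →₀ ℕ) (c : R) :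
    (aeval p (monomial v c)).totalDegree ≤ v.degree * d := by
  rw [aeval_monomial, algebraMap_eq]
  calc (C c * v.prod fun i k => p i ^ k).totalDegree
      ≤ (C c : MvPolynomial σ R).totalDegree + (∏ i ∈ v.support, p i ^ v i).totalDegree :=
        totalDegree_mul _ _
    _ ≤ 0 + ∑ i ∈ v.support, v i * d :=
        add_le_add (totalDegree_C c).le <| (totalDegree_finsetProd _ _).trans <|
          Finset.sum_le_sum fun i _ => (totalDegree_pow _ _).trans (Nat.mul_le_mul_left _ (hp i))
    _ = v.degree * d := by rw [zero_add, ← Finset.sum_mul]; rfl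

theorem homogeneousComponent_aeval_monomial (hp : ∀ i, (p i).totalDegree ≤ d)
    (v : ι →₀ ℕ) (c : R) :
    homogeneousComponent (v.degree * d) (aeval p (monomial v c)) =
      aeval (fun i => homogeneousComponent d (p i)) (monomial v c) := by
  have hdeg : v.degree * d = ∑ i ∈ v.support, v i * d := by rw [← Finset.sum_mul]; rfl
  rw [aeval_monomial, aeval_monomial, algebraMap_eq, homogeneousComponent_C_mul, Finsupp.prod,
    Finsupp.prod, hdeg, homogeneousComponent_prod_of_totalDegree_le _
      fun i _ => (totalDegree_pow _ _).trans (Nat.mul_le_mul_left _ (hp i))]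
  simp only [homogeneousComponent_pow_of_totalDegree_le (hp _)]

theorem homogeneousComponent_aeval_of_totalDegree_le (hd : 0 < d)
    (hp : ∀ i, (p i).totalDegree ≤ d) {Q : MvPolynomial ι R} {e : ℕ} (hQ : Q.totalDegree ≤ e) :
    homogeneousComponent (e * d) (aeval p Q) =
      aeval (fun i => homogeneousComponent d (p i)) (homogeneousComponent e Q) := by
  rw [Q.as_sum, map_sum, map_sum, map_sum, map_sum]
  refine Finset.sum_congr rfl fun v hv => ?_
  rw [homogeneousComponent_of_mem (isHomogeneous_monomial _ rfl)]
  split_ifs with he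
  · rw [he]
    exact homogeneousComponent_aeval_monomial hp v _
  · rw [map_zero]
    apply homogeneousComponent_eq_zero
    have hlt : v.degree < e := lt_of_le_of_ne ((le_totalDegree hv).trans hQ) (Ne.symm he)
    exact (totalDegree_aeval_monomial_le hp v _).trans_lt (Nat.mul_lt_mul_of_pos_right hlt hd)

end MvPolynomial

/-- If `p_1,…,p_q` are polynomials over `F` of the same total degree `d` and their initial
forms (top-degree homogeneous components) are algebraically independent over `F`, then
`p_1,…,p_q` are algebraically independent over `F`. -/
theorem algebraicIndependent_of_initialForms {F σ : Type*} [Field F] {q d : ℕ}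
    (p : Fin q → MvPolynomial σ F) (hdeg : ∀ i, (p i).totalDegree = d)
    (hin : AlgebraicIndependent F fun i => MvPolynomial.homogeneousComponent d (p i)) :
    AlgebraicIndependent F p := by
  rcases Nat.eq_zero_or_pos d with rfl | hd
  · have hp : (fun i => homogeneousComponent 0 (p i)) = p := funext fun i =>
      homogeneousComponent_eq_self (isHomogeneous_of_totalDegree_zero σ (hdeg i))
    rwa [hp] at hin
  · rw [algebraicIndependent_iff] at hin ⊢
    intro Q hQ
    by_contra hQ0
    have htop := homogeneousComponent_aeval_of_totalDegree_le hd (fun i => (hdeg i).le) le_rfl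
      (Q := Q)
    rw [hQ, map_zero] at htop
    exact homogeneousComponent_totalDegree_ne_zero hQ0 (hin _ htop.symm)
end

section
/- If a tensor Φ over a field K' is the sum of a tensor G whose entries generate a field of transcendence degree at least t over K, and a tensor of rank at most s over K', where K ⊆ K', then the entries of Φ generate a field of transcendence degree at least t − 3ns over K, for n×n×n tensors. -/
/-!
Algebraic independence over `K` is the independence relation of a matroid on `E`, whose closure
of a set `X` consists of the elements algebraic over `K[X]`. Each entry of `G = Φ - R` is a
polynomial in the entries of `Φ` and the at most `3ns` entries of the factors of `R`, so the
entries of `G` lie in the closure of these two sets. Hence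
`t ≤ rk (entries of G) ≤ rk (entries of Φ) + 3ns`, and an independent subset of the entries
of `Φ` of size `t - 3ns` exists.
-/

open Set

namespace Matroid

variable {α : Type*} {M : Matroid α}

lemma eRk_le_eRk_add_encard_of_subset_closure {X Y F : Set α} (h : Y ⊆ M.closure (X ∪ F)) :
    M.eRk Y ≤ M.eRk X + F.encard :=
  calc M.eRk Y ≤ M.eRk (M.closure (X ∪ F)) := M.eRk_mono h
    _ = M.eRk (X ∪ F) := M.eRk_closure_eq _
    _ ≤ M.eRk X + F.encard := M.eRk_union_le_eRk_add_encard X F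

end Matroid

namespace AlgebraicIndependent

variable {ι R A : Type*} [CommRing R] [CommRing A] [Algebra R A] [FaithfulSMul R A]

lemma subset_matroid_closure_of_subset_adjoin [IsDomain A] {s t : Set A}
    (h : t ⊆ Algebra.adjoin R s) : t ⊆ (matroid R A).closure s := by
  rw [matroid_closure_eq]
  intro x hx
  exact isAlgebraic_algebraMap (⟨x, h hx⟩ : Algebra.adjoin R s)

variable [NoZeroDivisors A]

lemma _root_.AlgebraicIndepOn.matroid_eRk_image [Nontrivial R] {f : ι → A} {s : Set ι}
    (h : AlgebraicIndepOn R f s) : (matroid R A).eRk (f '' s) = s.encard := by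
  have hinj : InjOn f s := injOn_iff_injective.mpr h.injective
  rw [Matroid.Indep.eRk_eq_encard h.image, hinj.encard_image]

lemma exists_finset_algebraicIndepOn_card_eq {f : ι → A} {k : ℕ}
    (hk : k ≤ (matroid R A).eRk (range f)) :
    ∃ u : Finset ι, u.card = k ∧ AlgebraicIndepOn R f u := by
  obtain ⟨I, hIf, hI, hIk⟩ := Matroid.le_eRk_iff.mp hk
  obtain ⟨s, rfl, hinj⟩ := exists_image_eq_injOn_of_subset_range hIf
  have hs : s.Finite := Finite.of_finite_image (finite_of_encard_eq_coe hIk) hinj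
  refine ⟨hs.toFinset, ?_, ?_⟩
  · rw [← Nat.cast_inj (R := ℕ∞), ← hs.encard_eq_coe_toFinset_card, ← hinj.encard_image, hIk]
  · rw [hs.coe_toFinset]
    exact (algebraicIndependent_image hinj).mpr hI

end AlgebraicIndependent

section FactorEntries

variable {ι κ A : Type*}

def factorEntries (a b c : ι → κ → A) : Set A :=
  range fun q : Fin 3 × ι × κ => ![a, b, c] q.1 q.2.1 q.2.2

lemma encard_factorEntries_le [Fintype ι] [Fintype κ] (a b c : ι → κ → A) :
    (factorEntries a b c).encard ≤ 3 * Fintype.card ι * Fintype.card κ := by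
  rw [factorEntries, ← image_univ]
  refine (encard_image_le _ _).trans_eq ?_
  simp [mul_assoc]

lemma sum_mul_mul_mem_adjoin_factorEntries {R : Type*} [CommRing R] [CommRing A] [Algebra R A]
    [Fintype ι] (a b c : ι → κ → A) (i j k : κ) :
    ∑ α, a α i * b α j * c α k ∈ Algebra.adjoin R (factorEntries a b c) :=
  Subalgebra.sum_mem _ fun α _ ↦ mul_mem (mul_mem
    (Algebra.subset_adjoin ⟨(0, α, i), rfl⟩) (Algebra.subset_adjoin ⟨(1, α, j), rfl⟩))
    (Algebra.subset_adjoin ⟨(2, α, k), rfl⟩)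

end FactorEntries

theorem freedom_of_sum_with_low_rank_general {K E : Type*} [Field K] [Field E] [Algebra K E]
    {n s t : ℕ} (G R Φ : Fin n → Fin n → Fin n → E)
    (K' : Subfield E)
    (hsum : ∀ i j k, Φ i j k = G i j k + R i j k)
    (hG : ∃ u : Finset (Fin n × Fin n × Fin n), u.card = t ∧
      AlgebraicIndependent K (fun p : {x // x ∈ u} => G p.1.1 p.1.2.1 p.1.2.2))
    (hR : ∃ a b c : Fin s → Fin n → K',
      ∀ i j k, R i j k = ∑ α, (a α i : E) * (b α j : E) * (c α k : E)) :
    ∃ u : Finset (Fin n × Fin n × Fin n), u.card = t - 3 * n * s ∧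
      AlgebraicIndependent K (fun p : {x // x ∈ u} => Φ p.1.1 p.1.2.1 p.1.2.2) := by
  obtain ⟨u, rfl, hGu⟩ := hG
  obtain ⟨a, b, c, hRabc⟩ := hR
  let φ : Fin n × Fin n × Fin n → E := fun p ↦ Φ p.1 p.2.1 p.2.2
  let γ : Fin n × Fin n × Fin n → E := fun p ↦ G p.1 p.2.1 p.2.2
  have hγ : AlgebraicIndepOn K γ u := hGu
  set M := AlgebraicIndependent.matroid K E
  let F := factorEntries (fun α i ↦ (a α i : E)) (fun α j ↦ (b α j : E)) (fun α k ↦ (c α k : E))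
  have hspan : γ '' u ⊆ M.closure (range φ ∪ F) := by
    refine AlgebraicIndependent.subset_matroid_closure_of_subset_adjoin ?_
    rintro _ ⟨⟨i, j, k⟩, -, rfl⟩
    change G i j k ∈ Algebra.adjoin K _
    rw [show G i j k = Φ i j k - R i j k by rw [hsum]; ring, hRabc]
    exact sub_mem (Algebra.subset_adjoin (Or.inl ⟨(i, j, k), rfl⟩))
      (Algebra.adjoin_mono subset_union_right (sum_mul_mul_mem_adjoin_factorEntries _ _ _ i j k))
  have hrank : (u.card : ℕ∞) ≤ M.eRk (range φ) + 3 * n * s := calc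
    (u.card : ℕ∞) = M.eRk (γ '' u) := by
      rw [AlgebraicIndepOn.matroid_eRk_image hγ, encard_coe_eq_coe_finsetCard]
    _ ≤ M.eRk (range φ) + F.encard :=
      Matroid.eRk_le_eRk_add_encard_of_subset_closure hspan
    _ ≤ M.eRk (range φ) + 3 * n * s := by
      gcongr
      have := encard_factorEntries_le (fun α i ↦ (a α i : E)) (fun α j ↦ (b α j : E))
        (fun α k ↦ (c α k : E))
      simp only [Fintype.card_fin] at this
      rwa [mul_right_comm] at this
  have hk : ((u.card - 3 * n * s : ℕ) : ℕ∞) ≤ M.eRk (range φ) := by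
    rwa [ENat.natCast_sub, tsub_le_iff_right]
  exact AlgebraicIndependent.exists_finset_algebraicIndepOn_card_eq (f := φ) hk

/-- If an `n×n×n` tensor `Φ` is the sum of a tensor `G` whose entries have at least `t`
degrees of freedom over `K` and a tensor `R` of rank at most `s` over a field `K' ⊇ K`,
then the entries of `Φ` have at least `t − 3ns` degrees of freedom over `K`. -/
theorem freedom_of_sum_with_low_rank {K E : Type*} [Field K] [Field E] [Algebra K E]
    {n s t : ℕ} (G R Φ : Fin n → Fin n → Fin n → E)
    (K' : Subfield E) (hK : Set.range (algebraMap K E) ⊆ K')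
    (hsum : ∀ i j k, Φ i j k = G i j k + R i j k)
    (hG : ∃ u : Finset (Fin n × Fin n × Fin n), u.card = t ∧
      AlgebraicIndependent K (fun p : {x // x ∈ u} => G p.1.1 p.1.2.1 p.1.2.2))
    (hR : ∃ a b c : Fin s → Fin n → K',
      ∀ i j k, R i j k = ∑ α, (a α i : E) * (b α j : E) * (c α k : E)) :
    ∃ u : Finset (Fin n × Fin n × Fin n), u.card = t - 3 * n * s ∧
      AlgebraicIndependent K (fun p : {x // x ∈ u} => Φ p.1.1 p.1.2.1 p.1.2.2) :=
  freedom_of_sum_with_low_rank_general G R Φ K' hsum hG hR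
end

section
/- Over any field F, if a tensor T has rank r, then the entries of T lie in a subfield generated over the prime field (together with any field containing the decomposition data) by at most 3nr elements for an n×n×n tensor; consequently, if the entries of an n×n×n tensor Φ are algebraically independent over a field K, then rank_{K'}(Φ) ≥ n²/3 for any field K' ⊇ K containing the entries of Φ. -/
/-!
A rank-`r` decomposition writes every entry of `Φ` as a polynomial in the `3nr` coordinates of
its factors, so all `n³` entries lie in the field generated by `3nr` elements. In the
algebraic-independence matroid an independent set inside the closure of a set `s` has at most
`#s` elements, hence `n³ ≤ 3nr` when the entries are algebraically independent.
-/

open Finset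

section Decomposition

variable {F τ ι : Type*} [Fintype τ] [Fintype ι]

def decompositionCoords [DecidableEq F] (a b c : τ → ι → F) : Finset F :=
  univ.image (fun p : τ × ι => a p.1 p.2) ∪ univ.image (fun p : τ × ι => b p.1 p.2) ∪
    univ.image (fun p : τ × ι => c p.1 p.2)

theorem card_decompositionCoords_le [DecidableEq F] (a b c : τ → ι → F) :
    #(decompositionCoords a b c) ≤ 3 * Fintype.card τ * Fintype.card ι := by
  have card_image_le' (f : τ → ι → F) :
      #(univ.image fun p : τ × ι => f p.1 p.2) ≤ Fintype.card τ * Fintype.card ι :=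
    card_image_le.trans_eq (by simp)
  grw [decompositionCoords, card_union_le, card_union_le, card_image_le' a, card_image_le' b,
    card_image_le' c]
  linarith

theorem sum_mul_mul_mem_closure_decompositionCoords [Field F] [DecidableEq F]
    (a b c : τ → ι → F) (i j k : ι) :
    ∑ t, a t i * b t j * c t k ∈ Subfield.closure (decompositionCoords a b c : Set F) := by
  refine Subfield.sum_mem _ fun t _ => mul_mem (mul_mem ?_ ?_) ?_ <;>
    exact Subfield.subset_closure (by simp [decompositionCoords])

end Decomposition

theorem exists_decomposition_fin_mul_self {R : Type*} [CommSemiring R] {n : ℕ}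
    (Φ : Fin n → Fin n → Fin n → R) :
    ∃ a b c : Fin (n * n) → Fin n → R,
      ∀ i j k, Φ i j k = ∑ t, a t i * b t j * c t k := by
  let e := (finProdFinEquiv : Fin n × Fin n ≃ Fin (n * n)).symm
  refine ⟨fun t i => Φ i (e t).1 (e t).2, fun t j => if (e t).1 = j then 1 else 0,
    fun t k => if (e t).2 = k then 1 else 0, fun i j k => ?_⟩
  rw [← e.symm.sum_comp]
  simp [Fintype.sum_prod_type]

theorem AlgebraicIndependent.card_le_card_of_isAlgebraic_adjoin {R A ι : Type*} [CommRing R]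
    [CommRing A] [IsDomain A] [Algebra R A] [Fintype ι] {x : ι → A}
    (hx : AlgebraicIndependent R x) (s : Finset A)
    (hs : ∀ i, IsAlgebraic (Algebra.adjoin R (s : Set A)) (x i)) :
    Fintype.card ι ≤ #s := by
  have := (algebraMap R A).domain_nontrivial
  have := (faithfulSMul_iff_algebraMap_injective R A).mpr hx.algebraMap_injective
  let M := AlgebraicIndependent.matroid R A
  have hind : M.Indep (Set.range x) :=
    AlgebraicIndependent.matroid_indep_iff.mpr hx.to_subtype_range
  have hsub : Set.range x ⊆ M.closure s := by
    rw [AlgebraicIndependent.matroid_closure_eq]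
    rintro _ ⟨i, rfl⟩
    exact hs i
  have : (Fintype.card ι : ℕ∞) ≤ #s :=
    calc (Fintype.card ι : ℕ∞) = ENat.card ι := ENat.card_eq_coe_fintype_card.symm
      _ ≤ (Set.range x).encard := hx.injective.encard_range
      _ ≤ M.eRk (M.closure s) := hind.encard_le_eRk_of_subset hsub
      _ = M.eRk s := M.eRk_closure_eq _
      _ ≤ (s : Set A).encard := M.eRk_le_encard _
      _ = #s := Set.encard_coe_eq_coe_finsetCard s
  exact_mod_cast this

theorem AlgebraicIndependent.card_le_card_of_mem_closure {K E ι : Type*} [Field K] [Field E]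
    [Algebra K E] [Fintype ι] {x : ι → E} (hx : AlgebraicIndependent K x) (s : Finset E)
    (hs : ∀ i, x i ∈ Subfield.closure (s : Set E)) :
    Fintype.card ι ≤ #s :=
  hx.card_le_card_of_isAlgebraic_adjoin s fun i =>
    IntermediateField.isAlgebraic_adjoin_iff.mp <| isAlgebraic_algebraMap
      (⟨x i, Subfield.closure_le.2 (IntermediateField.subset_adjoin K _) (hs i)⟩ :
        IntermediateField.adjoin K (s : Set E))

theorem rank_lower_bound_of_independent_entries_general {K E : Type*} [Field K] [Field E]
    [Algebra K E] {n : ℕ} (Φ : Fin n → Fin n → Fin n → E)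
    (K' : Subfield E) (hent : ∀ i j k, Φ i j k ∈ K') :
    (∀ r : ℕ, ∀ a b c : Fin r → Fin n → E,
      (∀ i j k, Φ i j k = ∑ t, a t i * b t j * c t k) →
        ∃ s : Finset E, s.card ≤ 3 * n * r ∧
          ∀ i j k, Φ i j k ∈ Subfield.closure (s : Set E)) ∧
    (AlgebraicIndependent K (fun p : Fin n × Fin n × Fin n => Φ p.1 p.2.1 p.2.2) →
      n ^ 2 ≤ 3 * sInf {r | ∃ a b c : Fin r → Fin n → K',
        ∀ i j k, Φ i j k = ∑ t, (a t i : E) * (b t j : E) * (c t k : E)}) := by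
  classical
  have entries_mem_closure : ∀ r : ℕ, ∀ a b c : Fin r → Fin n → E,
      (∀ i j k, Φ i j k = ∑ t, a t i * b t j * c t k) →
        ∃ s : Finset E, s.card ≤ 3 * n * r ∧
          ∀ i j k, Φ i j k ∈ Subfield.closure (s : Set E) := fun r a b c hΦ =>
    ⟨decompositionCoords a b c,
      (card_decompositionCoords_le a b c).trans_eq (by simp [mul_right_comm]),
      fun i j k => hΦ i j k ▸ sum_mul_mul_mem_closure_decompositionCoords a b c i j k⟩
  refine ⟨entries_mem_closure, fun hindep => ?_⟩
  set ranks := {r | ∃ a b c : Fin r → Fin n → K',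
    ∀ i j k, Φ i j k = ∑ t, (a t i : E) * (b t j : E) * (c t k : E)}
  have hranks : ranks.Nonempty := by
    obtain ⟨a, b, c, h⟩ :=
      exists_decomposition_fin_mul_self fun i j k => (⟨Φ i j k, hent i j k⟩ : K')
    exact ⟨n * n, a, b, c, fun i j k => by simpa using congrArg Subtype.val (h i j k)⟩
  obtain ⟨a, b, c, hdec⟩ := Nat.sInf_mem hranks
  obtain ⟨s, hcard, hmem⟩ := entries_mem_closure _ _ _ _ hdec
  have hcube := hindep.card_le_card_of_mem_closure s fun p => hmem p.1 p.2.1 p.2.2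
  simp only [Fintype.card_prod, Fintype.card_fin] at hcube
  rcases n.eq_zero_or_pos with rfl | hn
  · simp
  · exact Nat.le_of_mul_le_mul_left (by nlinarith) hn

/-- (a) If an `n×n×n` tensor `Φ` admits a rank-`r` decomposition, then its entries lie in the
subfield generated by at most `3nr` elements (the decomposition data). (b) Consequently, if
the `n³` entries of `Φ` are algebraically independent over a field `K`, then for every field
`K'` containing `K` and the entries of `Φ`, the rank of `Φ` over `K'` is at least `n²/3`. -/
theorem rank_lower_bound_of_independent_entries {K E : Type*} [Field K] [Field E]
    [Algebra K E] {n : ℕ} (Φ : Fin n → Fin n → Fin n → E)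
    (K' : Subfield E) (hK : Set.range (algebraMap K E) ⊆ K')
    (hent : ∀ i j k, Φ i j k ∈ K') :
    (∀ r : ℕ, ∀ a b c : Fin r → Fin n → E,
      (∀ i j k, Φ i j k = ∑ t, a t i * b t j * c t k) →
        ∃ s : Finset E, s.card ≤ 3 * n * r ∧
          ∀ i j k, Φ i j k ∈ Subfield.closure (s : Set E)) ∧
    (AlgebraicIndependent K (fun p : Fin n × Fin n × Fin n => Φ p.1 p.2.1 p.2.2) →
      n ^ 2 ≤ 3 * sInf {r | ∃ a b c : Fin r → Fin n → K',
        ∀ i j k, Φ i j k = ∑ t, (a t i : E) * (b t j : E) * (c t k : E)}) :=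
  rank_lower_bound_of_independent_entries_general Φ K' hent
end
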